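/- arXiv:2010.01517 — 2 statements merged into one kernel-verified Lean document; each statement's English description precedes it below -/
import Mathlib

section
/- There is no element α in the ring of integers Z[ζ_{23}] of the 23rd cyclotomic field whose absolute norm satisfies |N_{Q(ζ_{23})/Q}(α)| = 47. Consequently (via Z[ζ_{46}] = Z[ζ_{23}] and Swan's criterion), the field Q(C_{47}) is not Q-rational. -/
/-!
Let `K/ℚ` be Galois and `g ∈ K` with `g² = c`, `c` a squarefree integer. Splitting the conjugates
of `a ∈ 𝓞 K` according to whether the automorphism fixes or negates `g` gives two partial norms
`γ, γ'` which the Galois group permutes. Hence `γ + γ' = t ∈ ℤ` and `γ - γ' = w g` with `w ∈ ℚ`,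
so `t² - 4 N(a) = c w²`, and squarefreeness of `c` forces `w ∈ ℤ`. In `ℚ(ζ₂₃)` the quadratic Gauss
sum squares to `-23`, so `4 N(a) = t² + 23 w²`, and `4 · 47 = 188` is not of this form.
-/

open Finset NumberField

section FiberNorm

variable (F : Type*) {K : Type*} [Field F] [Field K] [Algebra F K] [FiniteDimensional F K]

open Classical in
/-- If `g` generates a quadratic subfield `L`, then `fiberNorm F g g x = N_{K/L} x`. -/
noncomputable def fiberNorm (g y x : K) : K :=
  ∏ σ : Gal(K/F) with σ g = y, σ x

variable {F}

theorem map_fiberNorm (ρ : Gal(K/F)) (g y x : K) :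
    ρ (fiberNorm F g y x) = fiberNorm F g (ρ y) x := by
  classical
  rw [fiberNorm, fiberNorm, map_prod]
  refine prod_equiv (Equiv.mulLeft ρ) (fun σ => ?_) (fun σ _ => rfl)
  simp [AlgEquiv.mul_apply]

theorem isIntegral_fiberNorm {R : Type*} [CommRing R] [Algebra R F] [Algebra R K]
    [IsScalarTower R F K] {x : K} (hx : IsIntegral R x) (g y : K) :
    IsIntegral R (fiberNorm F g y x) :=
  IsIntegral.prod _ fun σ _ => hx.map (σ.toAlgHom.restrictScalars R)

theorem fiberNorm_mul_fiberNorm_neg [IsGalois F K] {g : K}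
    (hσg : ∀ σ : Gal(K/F), σ g = g ∨ σ g = -g) (hg : g ≠ -g) (x : K) :
    fiberNorm F g g x * fiberNorm F g (-g) x = algebraMap F K (Algebra.norm F x) := by
  classical
  rw [Algebra.norm_eq_prod_automorphisms, fiberNorm, fiberNorm,
    ← prod_filter_mul_prod_filter_not univ (fun σ : Gal(K/F) => σ g = g)]
  congr 1
  refine prod_congr (filter_congr fun σ _ => ?_) fun _ _ => rfl
  rcases hσg σ with h | h <;> simp [h, hg, hg.symm]

end FiberNorm

theorem AlgEquiv.apply_eq_or_eq_neg_of_sq_eq_algebraMap {F K : Type*} [Field F] [Field K]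
    [Algebra F K] (σ : K ≃ₐ[F] K) {g : K} {c : F} (hg : g ^ 2 = algebraMap F K c) :
    σ g = g ∨ σ g = -g :=
  sq_eq_sq_iff_eq_or_eq_neg.mp (by rw [← map_pow, hg, AlgEquiv.commutes])

theorem Rat.exists_int_eq_of_squarefree_mul_sq {c n : ℤ} (hc : Squarefree c) {r : ℚ}
    (h : c * r ^ 2 = n) : ∃ w : ℤ, r = w := by
  have hnum : c * r.num ^ 2 = r.den ^ 2 * n := by
    have : (c * r.num ^ 2 : ℚ) = r.den ^ 2 * n := by rw [← Rat.mul_den_eq_num, ← h]; ring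
    exact_mod_cast this
  have hcop : IsCoprime ((r.den : ℤ) ^ 2) (r.num ^ 2) :=
    (Int.isCoprime_iff_gcd_eq_one.mpr (by rw [Int.gcd_comm]; exact r.reduced)).pow
  have hden : IsUnit (r.den : ℤ) := hc _ (by rw [← sq]; exact hcop.dvd_of_dvd_mul_right ⟨n, hnum⟩)
  have hden1 : r.den = 1 := by exact_mod_cast (Int.isUnit_iff.mp hden).resolve_right (by omega)
  exact ⟨r.num, (Rat.coe_int_num_of_den_eq_one hden1).symm⟩

theorem exists_int_eq_of_isIntegral_of_forall_apply_eq {K : Type*} [Field K] [NumberField K]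
    [IsGalois ℚ K] {x : K} (hx : IsIntegral ℤ x) (hfix : ∀ σ : Gal(K/ℚ), σ x = x) :
    ∃ t : ℤ, x = t := by
  obtain ⟨q, rfl⟩ := (IsGalois.mem_range_algebraMap_iff_fixed x).mpr hfix
  obtain ⟨t, rfl⟩ := IsIntegrallyClosed.isIntegral_iff.mp
    ((isIntegral_algebraMap_iff (algebraMap ℚ K).injective).mp hx)
  exact ⟨t, by simp⟩

theorem exists_sq_sub_four_mul_norm_eq_mul_sq {K : Type*} [Field K] [NumberField K]
    [IsGalois ℚ K] {c : ℤ} (hc : Squarefree c) {g : K} (hg : g ^ 2 = c) (a : 𝓞 K) :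
    ∃ t w : ℤ, t ^ 2 - 4 * Algebra.norm ℤ a = c * w ^ 2 := by
  have hσg (σ : Gal(K/ℚ)) : σ g = g ∨ σ g = -g :=
    σ.apply_eq_or_eq_neg_of_sq_eq_algebraMap (c := (c : ℚ)) (by simpa using hg)
  have hg0 : g ≠ 0 := by
    rintro rfl
    obtain rfl : c = 0 := by exact_mod_cast hg.symm.trans (zero_pow two_ne_zero)
    exact not_squarefree_zero hc
  set γ := fiberNorm ℚ g g (a : K)
  set γ' := fiberNorm ℚ g (-g) (a : K)
  have hfix (σ : Gal(K/ℚ)) (hσ : σ g = g) : σ γ = γ ∧ σ γ' = γ' := by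
    simp only [γ, γ', map_fiberNorm, map_neg, hσ, and_self]
  have hswap (σ : Gal(K/ℚ)) (hσ : σ g = -g) : σ γ = γ' ∧ σ γ' = γ := by
    simp only [γ, γ', map_fiberNorm, map_neg, hσ, neg_neg, and_self]
  have hnorm : γ * γ' = (Algebra.norm ℤ a : K) := by
    rw [fiberNorm_mul_fiberNorm_neg hσg (fun h => hg0 (self_eq_neg.mp h)),
      ← Algebra.coe_norm_int]
    simp
  obtain ⟨t, ht⟩ : ∃ t : ℤ, γ + γ' = t := by
    refine exists_int_eq_of_isIntegral_of_forall_apply_eq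
      ((isIntegral_fiberNorm a.isIntegral_coe _ _).add (isIntegral_fiberNorm a.isIntegral_coe _ _))
      fun σ => ?_
    rcases hσg σ with hσ | hσ
    · rw [map_add, (hfix σ hσ).1, (hfix σ hσ).2]
    · rw [map_add, (hswap σ hσ).1, (hswap σ hσ).2, add_comm]
  obtain ⟨r, hr⟩ : ∃ r : ℚ, algebraMap ℚ K r = (γ - γ') / g := by
    refine (IsGalois.mem_range_algebraMap_iff_fixed _).mpr fun σ => ?_
    rcases hσg σ with hσ | hσ
    · rw [map_div₀, map_sub, (hfix σ hσ).1, (hfix σ hσ).2, hσ]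
    · rw [map_div₀, map_sub, (hswap σ hσ).1, (hswap σ hσ).2, hσ, div_neg, ← neg_div, neg_sub]
  have hdisc : c * r ^ 2 = ((t ^ 2 - 4 * Algebra.norm ℤ a : ℤ) : ℚ) := by
    apply (algebraMap ℚ K).injective
    have hδ : γ - γ' = algebraMap ℚ K r * g := by rw [hr]; field_simp
    simp only [map_mul, map_pow, map_intCast, Int.cast_sub, Int.cast_mul, Int.cast_pow,
      Int.cast_ofNat, map_sub, map_ofNat]
    rw [← hg, ← ht, ← hnorm]
    linear_combination -(γ - γ' + algebraMap ℚ K r * g) * hδ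
  obtain ⟨w, rfl⟩ := Rat.exists_int_eq_of_squarefree_mul_sq hc hdisc
  exact ⟨t, w, by exact_mod_cast hdisc.symm⟩

theorem IsPrimitiveRoot.exists_sq_eq_χ₄_mul {K : Type*} [Field K] [CharZero K] {p : ℕ}
    [Fact p.Prime] (hp : p ≠ 2) {ζ : K} (hζ : IsPrimitiveRoot ζ p) :
    ∃ g : K, g ^ 2 = (ZMod.χ₄ p * p : ℤ) := by
  have hchar : ringChar (ZMod p) ≠ 2 := by rwa [ZMod.ringChar_zmod_n]
  refine ⟨gaussSum ((quadraticChar (ZMod p)).ringHomComp (Int.castRingHom K))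
    (AddChar.zmodChar p hζ.pow_eq_one), ?_⟩
  rw [gaussSum_sq ((MulChar.ringHomComp_ne_one_iff Int.cast_injective).mpr
      (quadraticChar_ne_one hchar)) ((quadraticChar_isQuadratic _).comp _)
      (AddChar.zmodChar_primitive_of_primitive_root p hζ)]
  simp [quadraticChar_neg_one hchar, ZMod.card]

theorem sq_add_twentythree_mul_sq_ne (t w : ℤ) : t ^ 2 + 23 * w ^ 2 ≠ 188 := by
  intro h
  obtain ⟨hw₁, hw₂⟩ : -2 ≤ w ∧ w ≤ 2 := by constructor <;> nlinarith [sq_nonneg t]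
  obtain ⟨ht₁, ht₂⟩ : -13 ≤ t ∧ t ≤ 13 := by constructor <;> nlinarith [sq_nonneg w]
  interval_cases w <;> interval_cases t <;> omega

/-- There is no element `α` of the ring of integers `ℤ[ζ₂₃]` of the 23rd
cyclotomic field with `|N_{ℚ(ζ₂₃)/ℚ}(α)| = 47`. -/
theorem stmt7 (K : Type*) [Field K] [NumberField K]
    [IsCyclotomicExtension {23} ℚ K] :
    ¬ ∃ α : NumberField.RingOfIntegers K,
        Algebra.norm ℤ α = 47 ∨ Algebra.norm ℤ α = -47 := by
  rintro ⟨α, hα⟩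
  have := IsCyclotomicExtension.isGalois {23} ℚ K
  have : Fact (Nat.Prime 23) := ⟨by norm_num⟩
  obtain ⟨g, hg⟩ := (IsCyclotomicExtension.zeta_spec 23 ℚ K).exists_sq_eq_χ₄_mul (by norm_num)
  have hg' : g ^ 2 = ((-23 : ℤ) : K) := by
    rw [hg, ZMod.χ₄_nat_three_mod_four (by norm_num)]; norm_num
  have hsq : Squarefree (-23 : ℤ) :=
    Int.squarefree_natAbs.mp (by norm_num : Nat.Prime 23).prime.squarefree
  obtain ⟨t, w, h⟩ := exists_sq_sub_four_mul_norm_eq_mul_sq hsq hg' α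
  rcases hα with hα | hα <;> rw [hα] at h
  · exact sq_add_twentythree_mul_sq_ne t w (by linarith)
  · nlinarith [sq_nonneg t, sq_nonneg w]
end

section
/- Let π be a finite group and M a Z[π]-module that is free of finite rank n as an abelian group and is a permutation module, i.e., M has a Z-basis e_1, …, e_n permuted by the action of π. Let L/k be a finite Galois extension with Galois group π, and let π act on the rational function field L(y_1, …, y_n) semilinearly: via the Galois action on L and via σ(y_i) = ∏_j y_j^{a_{ij}(σ)} where σ·e_i = Σ_j a_{ij}(σ) e_j. Then the fixed field L(y_1,…,y_n)^π is purely transcendental (rational) over k of transcendence degree n. -/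
open MvPolynomial

/-!
The Galois-invariant vectors `v ∈ Lⁿ`, those with `σ (v j) = v (τ σ j)`, span `Lⁿ` over `L`:
an `L`-linear form vanishing on every "trace vector" `∑_σ σ a • e_{τ σ j}` has its
coefficients killed by Dedekind's independence of characters. A basis of invariant vectors is
an invertible matrix `A` with `σ (A i j) = A (τ σ i) j`, and the linear forms
`zᵢ = ∑ⱼ yⱼ A j i` are then `π`-invariant, algebraically independent over `L` and generate `F`.
So `F = L(z)` with `π` acting on coefficients only. An invariant fraction `r / s` can be written
over the invariant denominator `∏_σ σ s`, its numerator is then invariant too, and invariant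
polynomials have coefficients in `k`; hence `F^π = k(z) ≅ k(x₁, …, xₙ)`.
-/

section LinearSubst

variable {R ι : Type*} [CommRing R] [Fintype ι]

noncomputable def linearSubst (M : Matrix ι ι R) : MvPolynomial ι R →ₐ[R] MvPolynomial ι R :=
  aeval (Matrix.vecMul X (M.map C))

theorem linearSubst_comp (M N : Matrix ι ι R) :
    (linearSubst M).comp (linearSubst N) = linearSubst (M * N) := by
  refine algHom_ext fun i => ?_
  rw [AlgHom.comp_apply, linearSubst, linearSubst, linearSubst, aeval_X, aeval_X,
    ← AlgHom.coe_toRingHom, RingHom.map_vecMul, Matrix.map_mul, ← Matrix.vecMul_vecMul]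
  set φ : MvPolynomial ι R →+* MvPolynomial ι R :=
    ↑(aeval (R := R) (Matrix.vecMul X (M.map C)))
  have hX : φ ∘ X = Matrix.vecMul X (M.map C) := funext fun j => aeval_X _ j
  have hC : (N.map C).map φ = N.map C := by ext; simp [φ]
  rw [hX, hC]

theorem linearSubst_one [DecidableEq ι] : linearSubst (1 : Matrix ι ι R) = AlgHom.id R _ := by
  refine algHom_ext fun i => ?_
  rw [linearSubst, Matrix.map_one _ (map_zero C) (map_one C), Matrix.vecMul_one, aeval_X_left]

noncomputable def linearSubstEquiv [DecidableEq ι] (A : (Matrix ι ι R)ˣ) :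
    MvPolynomial ι R ≃ₐ[R] MvPolynomial ι R :=
  AlgEquiv.ofAlgHom (linearSubst A) (linearSubst ↑A⁻¹)
    (by rw [linearSubst_comp, Units.mul_inv, linearSubst_one])
    (by rw [linearSubst_comp, Units.inv_mul, linearSubst_one])

theorem linearSubstEquiv_X [DecidableEq ι] (A : (Matrix ι ι R)ˣ) (i : ι) :
    linearSubstEquiv A (X i) = ∑ j, X j * C ((A : Matrix ι ι R) j i) := by
  simp [linearSubstEquiv, linearSubst, Matrix.vecMul, dotProduct]

end LinearSubst

section GaloisDescent

variable {k L ι : Type*} [Field k] [Field L] [Algebra k L] [FiniteDimensional k L]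
  [Fintype ι] [DecidableEq ι]

theorem span_setOf_forall_apply_eq_top (τ : (L ≃ₐ[k] L) →* Equiv.Perm ι) :
    Submodule.span L {v : ι → L | ∀ σ j, σ (v j) = v (τ σ j)} = ⊤ := by
  by_contra hne
  obtain ⟨f, hf0, hf⟩ :=
    Submodule.exists_dual_map_eq_bot_of_lt_top (lt_top_iff_ne_top.2 hne) inferInstance
  have hsingle : ∀ l c, f (Pi.single l c) = f (Pi.single l 1) * c := fun l c => by
    rw [mul_comm, ← smul_eq_mul, ← map_smul, ← Pi.single_smul, smul_eq_mul, mul_one]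
  refine hf0 (LinearMap.pi_ext fun j c => ?_)
  set trace : L → ι → L := fun a => ∑ σ : L ≃ₐ[k] L, Pi.single (τ σ j) (σ a)
  have htrace : ∀ a σ l, σ (trace a l) = trace a (τ σ l) := by
    intro a σ l
    simp only [trace]
    conv_rhs => rw [← Equiv.sum_comp (Equiv.mulLeft σ)]
    simp only [Finset.sum_apply, map_sum, Pi.single_apply, Equiv.coe_mulLeft, map_mul,
      Equiv.Perm.mul_apply, (τ σ).injective.eq_iff, apply_ite σ, map_zero, AlgEquiv.mul_apply]
  have hcoeff :
      ∑ σ : L ≃ₐ[k] L, f (Pi.single (τ σ j) 1) • (σ : L →ₐ[k] L).toLinearMap = 0 := by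
    refine LinearMap.ext fun a => ?_
    have : f (trace a) = 0 := by
      rw [← Submodule.mem_bot L, ← hf]
      exact Submodule.mem_map_of_mem (Submodule.subset_span (htrace a))
    rw [map_sum] at this
    simp only [LinearMap.sum_apply, LinearMap.smul_apply,
      AlgHom.toLinearMap_apply, AlgEquiv.coe_toAlgHom, smul_eq_mul, LinearMap.zero_apply]
    rw [← this]
    exact Finset.sum_congr rfl fun σ _ => (hsingle _ _).symm
  -- Dedekind's lemma: distinct automorphisms are linearly independent over `L`
  have hzero := Fintype.linearIndependent_iff.1 ((linearIndependent_toLinearMap k L L).comp _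
    AlgEquiv.coe_toAlgHom_injective) _ hcoeff 1
  rw [map_one, Equiv.Perm.one_apply] at hzero
  rw [hsingle, hzero, zero_mul, LinearMap.zero_apply]

theorem exists_isUnit_matrix_forall_apply_eq (τ : (L ≃ₐ[k] L) →* Equiv.Perm ι) :
    ∃ A : Matrix ι ι L, IsUnit A ∧ ∀ σ i j, σ (A i j) = A (τ σ i) j := by
  obtain ⟨s, hsW, hspan, hli⟩ := exists_linearIndependent L
    {v : ι → L | ∀ σ j, σ (v j) = v (τ σ j)}
  let b₀ := Module.Basis.mk hli
    (by rw [Subtype.range_coe, hspan, span_setOf_forall_apply_eq_top])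
  let b := b₀.reindex (b₀.indexEquiv (Pi.basisFun L ι))
  refine ⟨(Pi.basisFun L ι).toMatrix b, ?_, fun σ i j => ?_⟩
  · let := (Pi.basisFun L ι).invertibleToMatrix b
    exact isUnit_of_invertible _
  · simp only [Module.Basis.toMatrix_apply, Pi.basisFun_repr, b, Module.Basis.reindex_apply,
      b₀, Module.Basis.mk_apply]
    exact hsW (Subtype.mem _) σ i

end GaloisDescent

section FixedField

variable {k L ι : Type*} [Field k] [Field L] [Algebra k L]

theorem mem_range_map_algebraMap_of_forall_map_eq [FiniteDimensional k L] [IsGalois k L]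
    {P : MvPolynomial ι L} (hP : ∀ σ : L ≃ₐ[k] L, map (σ : L →+* L) P = P) :
    P ∈ Set.range (map (algebraMap k L)) := by
  rw [mem_range_map_iff_coeffs_subset]
  intro a ha
  obtain ⟨m, -, rfl⟩ := mem_coeffs_iff.1 ha
  rw [IsGalois.mem_range_algebraMap_iff_fixed]
  intro σ
  conv_rhs => rw [← hP σ]
  rw [coeff_map]
  rfl

theorem exists_mul_ne_zero_forall_map_eq [FiniteDimensional k L] {q : MvPolynomial ι L}
    (hq : q ≠ 0) : ∃ r, q * r ≠ 0 ∧ ∀ σ : L ≃ₐ[k] L, map (σ : L →+* L) (q * r) = q * r := by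
  classical
  have hprod : q * ∏ σ ∈ Finset.univ.erase (1 : L ≃ₐ[k] L), map (σ : L →+* L) q =
      ∏ σ : L ≃ₐ[k] L, map (σ : L →+* L) q := by
    rw [← Finset.mul_prod_erase _ _ (Finset.mem_univ 1)]
    congr 1
    exact (map_id q).symm
  refine ⟨∏ σ ∈ Finset.univ.erase (1 : L ≃ₐ[k] L), map (σ : L →+* L) q, ?_, fun σ => ?_⟩ <;>
    rw [hprod]
  · exact Finset.prod_ne_zero_iff.2 fun σ _ =>
      ((map_injective _ σ.injective).ne_iff' (map_zero _)).2 hq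
  · rw [map_prod]
    simp only [map_map]
    exact Equiv.prod_comp (Equiv.mulLeft σ) (fun σ' => map (σ' : L →+* L) q)

variable {F : Type*} [Field F] [Algebra L F] [Algebra k F]

theorem aeval_map_of_forall_apply_eq (ρ : (L ≃ₐ[k] L) →* (F ≃ₐ[k] F))
    (hcompat : ∀ σ a, ρ σ (algebraMap L F a) = algebraMap L F (σ a))
    {z : ι → F} (hz : ∀ σ i, ρ σ (z i) = z i) (σ : L ≃ₐ[k] L) (p : MvPolynomial ι L) :
    ρ σ (aeval z p) = aeval z (map (σ : L →+* L) p) := by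
  induction p using MvPolynomial.induction_on with
  | C a => simp [hcompat]
  | add p q hp hq => simp [hp, hq]
  | mul_X p i hp => simp [hp, hz]

theorem fixedField_eq_adjoin_of_forall_apply_eq [FiniteDimensional k L] [IsGalois k L]
    [IsScalarTower k L F] (ρ : (L ≃ₐ[k] L) →* (F ≃ₐ[k] F))
    (hcompat : ∀ σ a, ρ σ (algebraMap L F a) = algebraMap L F (σ a))
    {z : ι → F} (hz : ∀ σ i, ρ σ (z i) = z i) (hind : AlgebraicIndependent L z)
    (hgen : IntermediateField.adjoin L (Set.range z) = ⊤) :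
    IntermediateField.fixedField ρ.range = IntermediateField.adjoin k (Set.range z) := by
  refine le_antisymm (fun x hx => ?_) (IntermediateField.adjoin_le_iff.2 ?_)
  · have hfix : ∀ σ, ρ σ x = x := fun σ => hx ⟨ρ σ, σ, rfl⟩
    have hinj := (injective_iff_map_eq_zero (aeval z : MvPolynomial ι L →ₐ[L] F)).1 hind
    obtain ⟨r, s, rfl⟩ := (IntermediateField.mem_adjoin_range_iff L z x).1 (hgen ▸ trivial)
    by_cases hs : aeval z s = 0
    · rw [hs, div_zero]
      exact zero_mem _
    obtain ⟨t, hst, hQfix⟩ :=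
      exists_mul_ne_zero_forall_map_eq (k := k) (q := s) fun h => hs (by rw [h, map_zero])
    have hQ0 : aeval z (s * t) ≠ 0 := fun h => hst (hinj _ h)
    have hfrac : aeval z r / aeval z s = aeval z (r * t) / aeval z (s * t) := by
      rw [map_mul, map_mul, mul_div_mul_right]
      exact right_ne_zero_of_mul (map_mul (aeval z) s t ▸ hQ0)
    have hPfix : ∀ σ : L ≃ₐ[k] L, map (σ : L →+* L) (r * t) = r * t := by
      intro σ
      apply hind
      rw [← aeval_map_of_forall_apply_eq ρ hcompat hz, ← div_mul_cancel₀ (aeval z (r * t)) hQ0,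
        ← hfrac, map_mul, hfix, aeval_map_of_forall_apply_eq ρ hcompat hz, hQfix σ]
    obtain ⟨P, hP⟩ := mem_range_map_algebraMap_of_forall_map_eq hPfix
    obtain ⟨Q, hQ⟩ := mem_range_map_algebraMap_of_forall_map_eq hQfix
    rw [hfrac, ← hP, ← hQ, aeval_map_algebraMap, aeval_map_algebraMap]
    exact (IntermediateField.mem_adjoin_range_iff k z _).2 ⟨P, Q, rfl⟩
  · rintro _ ⟨i, rfl⟩ ⟨_, σ, rfl⟩
    exact hz σ i

theorem nonempty_fixedField_algEquiv_of_forall_apply_eq [FiniteDimensional k L] [IsGalois k L]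
    [IsScalarTower k L F] (ρ : (L ≃ₐ[k] L) →* (F ≃ₐ[k] F))
    (hcompat : ∀ σ a, ρ σ (algebraMap L F a) = algebraMap L F (σ a))
    {z : ι → F} (hz : ∀ σ i, ρ σ (z i) = z i) (hind : AlgebraicIndependent L z)
    (hgen : IntermediateField.adjoin L (Set.range z) = ⊤)
    (F₀ : Type*) [Field F₀] [Algebra (MvPolynomial ι k) F₀]
    [IsFractionRing (MvPolynomial ι k) F₀] [Algebra k F₀]
    [IsScalarTower k (MvPolynomial ι k) F₀] :
    Nonempty (IntermediateField.fixedField ρ.range ≃ₐ[k] F₀) := by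
  rw [fixedField_eq_adjoin_of_forall_apply_eq ρ hcompat hz hind hgen]
  exact ⟨(hind.restrictScalars (algebraMap k L).injective).aevalEquivField.symm.trans
    ((FractionRing.algEquiv (MvPolynomial ι k) F₀).restrictScalars k)⟩

end FixedField

section FractionField

variable {L ι F : Type*} [Field L] [Field F] [Algebra (MvPolynomial ι L) F] [Algebra L F]
  [IsScalarTower L (MvPolynomial ι L) F] (e : MvPolynomial ι L ≃ₐ[L] MvPolynomial ι L)

theorem aeval_algebraMap_algEquiv_X :
    aeval (fun i => algebraMap (MvPolynomial ι L) F (e (X i))) =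
      (IsScalarTower.toAlgHom L (MvPolynomial ι L) F).comp e.toAlgHom :=
  algHom_ext fun i => by simp

theorem algebraicIndependent_algebraMap_algEquiv_X [IsFractionRing (MvPolynomial ι L) F] :
    AlgebraicIndependent L fun i => algebraMap (MvPolynomial ι L) F (e (X i)) := by
  rw [AlgebraicIndependent, aeval_algebraMap_algEquiv_X]
  exact (IsFractionRing.injective (MvPolynomial ι L) F).comp e.injective

theorem adjoin_range_algebraMap_algEquiv_X_eq_top [IsFractionRing (MvPolynomial ι L) F] :
    IntermediateField.adjoin L (Set.range fun i => algebraMap (MvPolynomial ι L) F (e (X i))) =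
      ⊤ := by
  refine eq_top_iff.2 fun x _ => (IntermediateField.mem_adjoin_range_iff L _ x).2 ?_
  obtain ⟨p, q, -, rfl⟩ := IsFractionRing.div_surjective (A := MvPolynomial ι L) x
  refine ⟨e.symm p, e.symm q, ?_⟩
  simp [aeval_algebraMap_algEquiv_X]

end FractionField

theorem stmt15_general (k L : Type*) [Field k] [Field L] [Algebra k L]
    [FiniteDimensional k L] [IsGalois k L] (n : ℕ)
    (F : Type*) [Field F]
    [Algebra (MvPolynomial (Fin n) L) F] [IsFractionRing (MvPolynomial (Fin n) L) F]
    [Algebra L F] [IsScalarTower L (MvPolynomial (Fin n) L) F]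
    [Algebra k F] [IsScalarTower k L F]
    (y : Fin n → F)
    (hy : ∀ i, y i = algebraMap (MvPolynomial (Fin n) L) F (X i))
    (ρ : (L ≃ₐ[k] L) →* (F ≃ₐ[k] F))
    (hcompat : ∀ (σ : L ≃ₐ[k] L) (a : L), ρ σ (algebraMap L F a) = algebraMap L F (σ a))
    (τ : (L ≃ₐ[k] L) →* Equiv.Perm (Fin n))
    (hperm : ∀ (σ : L ≃ₐ[k] L) (i : Fin n), ρ σ (y i) = y (τ σ i))
    (F₀ : Type*) [Field F₀]
    [Algebra (MvPolynomial (Fin n) k) F₀] [IsFractionRing (MvPolynomial (Fin n) k) F₀]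
    [Algebra k F₀] [IsScalarTower k (MvPolynomial (Fin n) k) F₀] :
    Nonempty ((IntermediateField.fixedField ρ.range : IntermediateField k F) ≃ₐ[k] F₀) := by
  obtain ⟨A, hA, hAσ⟩ := exists_isUnit_matrix_forall_apply_eq τ
  set e := linearSubstEquiv hA.unit
  have hlin : ∀ i, algebraMap _ F (e (X i)) = ∑ j, y j * algebraMap L F (A j i) := by
    intro i
    simp [e, linearSubstEquiv_X, hy, IsScalarTower.algebraMap_apply L (MvPolynomial (Fin n) L) F]
  have hfix : ∀ σ i, ρ σ (algebraMap _ F (e (X i))) = algebraMap _ F (e (X i)) := by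
    intro σ i
    rw [hlin, map_sum]
    conv_rhs => rw [← Equiv.sum_comp (τ σ)]
    simp [hperm, hcompat, hAσ]
  exact nonempty_fixedField_algEquiv_of_forall_apply_eq ρ hcompat hfix
    (algebraicIndependent_algebraMap_algEquiv_X e) (adjoin_range_algebraMap_algEquiv_X_eq_top e) F₀

/-- Masuda's lemma: let `L/k` be a finite Galois extension with group
`π = Gal(L/k)`, let `π` act semilinearly on `F = L(y₁,…,y_n)` (via `k`-algebra
automorphisms extending the Galois action on `L`) so that the variables
`y₁,…,y_n` are permuted by the action (a permutation lattice).  Then the fixed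
field `F^π` is purely transcendental of transcendence degree `n` over `k`,
i.e. `k`-isomorphic to the rational function field `k(x₁,…,x_n)`. -/
theorem stmt15 (k L : Type*) [Field k] [Field L] [Algebra k L]
    [FiniteDimensional k L] [IsGalois k L] (n : ℕ)
    (F : Type*) [Field F]
    [Algebra (MvPolynomial (Fin n) L) F] [IsFractionRing (MvPolynomial (Fin n) L) F]
    [Algebra L F] [IsScalarTower L (MvPolynomial (Fin n) L) F]
    [Algebra k F] [IsScalarTower k L F]
    (y : Fin n → F)
    (hy : ∀ i, y i = algebraMap (MvPolynomial (Fin n) L) F (X i))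
    (ρ : (L ≃ₐ[k] L) →* (F ≃ₐ[k] F)) (hρ : Function.Injective ρ)
    (hcompat : ∀ (σ : L ≃ₐ[k] L) (a : L), ρ σ (algebraMap L F a) = algebraMap L F (σ a))
    (τ : (L ≃ₐ[k] L) →* Equiv.Perm (Fin n))
    (hperm : ∀ (σ : L ≃ₐ[k] L) (i : Fin n), ρ σ (y i) = y (τ σ i))
    (F₀ : Type*) [Field F₀]
    [Algebra (MvPolynomial (Fin n) k) F₀] [IsFractionRing (MvPolynomial (Fin n) k) F₀]
    [Algebra k F₀] [IsScalarTower k (MvPolynomial (Fin n) k) F₀] :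
    Nonempty ((IntermediateField.fixedField ρ.range : IntermediateField k F) ≃ₐ[k] F₀) :=
  stmt15_general k L n F y hy ρ hcompat τ hperm F₀
end
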